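/- arXiv:1606.06819 — 4 statements merged into one kernel-verified Lean document; each statement's English description precedes it below -/
import Mathlib

section
/- In Wythoff's game, a position (a,b) with a ≤ b is a P position if and only if there exists a nonnegative integer n with a = ⌊nφ⌋ and b = ⌊nφ²⌋, where φ = (1+√5)/2 is the golden ratio. -/
/-!
The pairs `(⌊nφ⌋, ⌊nφ²⌋)` and their mirror images form a set of positions with no move between
two of its members, reachable by one move from every position outside it; such a set is exactly
the set of P positions. A move keeps one coordinate or the difference of the coordinates. Since
`⌊nφ²⌋ = ⌊nφ⌋ + n`, the pair of index `n` has difference `n`, and by Rayleigh's theorem for the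
complementary Beatty sequences of `φ` and `φ²` every positive integer is a coordinate of exactly
one pair up to mirroring, so no move joins two pairs. From any other position `(a, a + d)`, write
`a` as `⌊mφ⌋` or `⌊mφ²⌋`: lowering `a + d` or moving diagonally, according to how `m` compares
with `d`, reaches a pair.
-/

namespace Wythoff

/-- A move in Wythoff's game: decrease one coordinate, or both by the same positive amount. -/
def Move (p q : ℕ × ℕ) : Prop :=
  (q.1 < p.1 ∧ q.2 = p.2) ∨ (q.1 = p.1 ∧ q.2 < p.2) ∨
  (∃ k, 0 < k ∧ k ≤ p.1 ∧ k ≤ p.2 ∧ q = (p.1 - k, p.2 - k))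

theorem Move.sum_lt {p q : ℕ × ℕ} (h : Move p q) : q.1 + q.2 < p.1 + p.2 := by
  rcases h with ⟨h1, h2⟩ | ⟨h1, h2⟩ | ⟨k, hk, h1, h2, hq⟩ <;> subst_vars <;> simp_all <;> omega

/-- P positions: every option is an N position (i.e. no option is itself P). -/
def PPos (p : ℕ × ℕ) : Prop := ∀ q, Move p q → ¬ PPos q
termination_by p.1 + p.2
decreasing_by exact Move.sum_lt (by assumption)

/-- N positions: some option is a P position. -/
def NPos (p : ℕ × ℕ) : Prop := ∃ q, Move p q ∧ PPos q

end Wythoff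


noncomputable def phi : ℝ := (1 + Real.sqrt 5) / 2

open Real goldenRatio

theorem Real.holderConjugate_goldenRatio_sq : HolderConjugate φ (φ ^ 2) := by
  rw [holderConjugate_iff_eq_conjExponent one_lt_goldenRatio,
    eq_div_iff (sub_ne_zero.2 one_lt_goldenRatio.ne')]
  linear_combination φ * goldenRatio_sq

open scoped symmDiff in
theorem Real.beattySeq_goldenRatio_symmDiff_beattySeq_goldenRatio_sq_pos :
    {beattySeq φ k | k > 0} ∆ {beattySeq (φ ^ 2) k | k > 0} = {n | 0 < n} :=
  goldenRatio_irrational.beattySeq_symmDiff_beattySeq_pos holderConjugate_goldenRatio_sq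

namespace Wythoff

theorem Move.swap {p q : ℕ × ℕ} (h : Move p q) : Move p.swap q.swap := by
  rcases h with ⟨h1, h2⟩ | ⟨h1, h2⟩ | ⟨k, hk, h1, h2, rfl⟩
  · exact .inr (.inl ⟨h2, h1⟩)
  · exact .inl ⟨h2, h1⟩
  · exact .inr (.inr ⟨k, hk, h2, h1, rfl⟩)

theorem pPos_iff_mem {S : Set (ℕ × ℕ)} (stable : ∀ p ∈ S, ∀ q ∈ S, ¬ Move p q)
    (absorbing : ∀ p ∉ S, ∃ q ∈ S, Move p q) (p : ℕ × ℕ) : PPos p ↔ p ∈ S := by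
  rw [PPos]
  constructor
  · intro hp
    by_contra hpS
    obtain ⟨q, hqS, hpq⟩ := absorbing p hpS
    exact hp q hpq ((pPos_iff_mem stable absorbing q).2 hqS)
  · intro hpS q hpq hq
    exact stable p hpS q ((pPos_iff_mem stable absorbing q).1 hq) hpq
termination_by p.1 + p.2
decreasing_by all_goals exact Move.sum_lt hpq

noncomputable def lower (n : ℕ) : ℕ := ⌊n * φ⌋₊

noncomputable def upper (n : ℕ) : ℕ := ⌊n * φ ^ 2⌋₊

theorem natCast_lower (n : ℕ) : (lower n : ℤ) = ⌊n * φ⌋ :=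
  Int.natCast_floor_eq_floor (by positivity)

theorem natCast_upper (n : ℕ) : (upper n : ℤ) = ⌊n * φ ^ 2⌋ :=
  Int.natCast_floor_eq_floor (by positivity)

theorem upper_eq_lower_add (n : ℕ) : upper n = lower n + n := by
  rw [upper, lower, goldenRatio_sq, mul_add, mul_one, Nat.floor_add_natCast (by positivity)]

theorem lower_zero : lower 0 = 0 := by simp [lower]

theorem lower_strictMono : StrictMono lower := by
  refine strictMono_nat_of_lt_succ fun n => ?_
  have : (n : ℝ) * φ + 1 ≤ (n + 1 : ℕ) * φ := by
    push_cast
    linarith [one_lt_goldenRatio]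
  calc lower n < ⌊(n : ℝ) * φ + 1⌋₊ := by
        rw [Nat.floor_add_one (by positivity)]; exact Nat.lt_succ_self _
    _ ≤ lower (n + 1) := Nat.floor_le_floor this

theorem eq_zero_of_lower_eq_upper {m n : ℕ} (h : lower m = upper n) : n = 0 := by
  by_contra hn
  have hm : m ≠ 0 := by
    rintro rfl
    rw [lower_zero, upper_eq_lower_add] at h
    omega
  have hpos : (0 : ℤ) < upper n := by rw [upper_eq_lower_add]; omega
  rcases Set.mem_symmDiff.1
    (beattySeq_goldenRatio_symmDiff_beattySeq_goldenRatio_sq_pos.ge hpos) with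
    ⟨-, hnot⟩ | ⟨-, hnot⟩
  · exact hnot ⟨n, by omega, by rw [beattySeq, Int.cast_natCast, natCast_upper]⟩
  · exact hnot ⟨m, by omega, by rw [beattySeq, Int.cast_natCast, ← natCast_lower, h]⟩

theorem exists_lower_eq_or_exists_upper_eq (j : ℕ) : (∃ m, lower m = j) ∨ ∃ n, upper n = j := by
  rcases j.eq_zero_or_pos with rfl | hj
  · exact .inl ⟨0, lower_zero⟩
  rcases Set.mem_symmDiff.1 (beattySeq_goldenRatio_symmDiff_beattySeq_goldenRatio_sq_pos.ge
    (show (0 : ℤ) < j by omega)) with ⟨⟨k, hk, hkj⟩, -⟩ | ⟨⟨k, hk, hkj⟩, -⟩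
  all_goals lift k to ℕ using hk.le
  · rw [beattySeq, Int.cast_natCast, ← natCast_lower] at hkj
    exact .inl ⟨k, by exact_mod_cast hkj⟩
  · rw [beattySeq, Int.cast_natCast, ← natCast_upper] at hkj
    exact .inr ⟨k, by exact_mod_cast hkj⟩

def pairs : Set (ℕ × ℕ) := {p | ∃ n, p = (lower n, upper n) ∨ p = (upper n, lower n)}

theorem swap_mem_pairs {p : ℕ × ℕ} (hp : p ∈ pairs) : p.swap ∈ pairs := by
  obtain ⟨n, rfl | rfl⟩ := hp
  exacts [⟨n, .inr rfl⟩, ⟨n, .inl rfl⟩]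

theorem not_move_of_mem_pairs {p q : ℕ × ℕ} (hp : p ∈ pairs) (hq : q ∈ pairs) : ¬ Move p q := by
  obtain ⟨n, rfl | rfl⟩ := hp <;> obtain ⟨m, rfl | rfl⟩ := hq <;>
  · have := upper_eq_lower_add m
    have := upper_eq_lower_add n
    have := lower_strictMono.lt_iff_lt (a := m) (b := n)
    have := lower_strictMono.lt_iff_lt (a := n) (b := m)
    have := eq_zero_of_lower_eq_upper (m := m) (n := n)
    have := eq_zero_of_lower_eq_upper (m := n) (n := m)
    rintro (h | h | ⟨k, hk, hk₁, hk₂, h⟩) <;> simp only [Prod.ext_iff] at h <;> omega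

theorem exists_move_mem_pairs {p : ℕ × ℕ} (hp : p ∉ pairs) : ∃ q ∈ pairs, Move p q := by
  wlog hle : p.1 ≤ p.2 generalizing p
  · obtain ⟨q, hq, hpq⟩ :=
      this (p := p.swap) (fun h => hp (by simpa using swap_mem_pairs h)) (by simp; omega)
    exact ⟨q.swap, swap_mem_pairs hq, by simpa using hpq.swap⟩
  obtain ⟨a, b⟩ := p
  obtain ⟨d, rfl⟩ : ∃ d, b = a + d := Nat.exists_eq_add_of_le hle
  rcases exists_lower_eq_or_exists_upper_eq a with ⟨m, rfl⟩ | ⟨m, rfl⟩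
  · rcases lt_trichotomy m d with hmd | rfl | hdm
    · refine ⟨(lower m, upper m), ⟨m, .inl rfl⟩, .inr (.inl ⟨rfl, ?_⟩)⟩
      rw [upper_eq_lower_add]
      omega
    · exact (hp ⟨m, .inl (by rw [upper_eq_lower_add])⟩).elim
    · have := lower_strictMono hdm
      refine ⟨(lower d, upper d), ⟨d, .inl rfl⟩,
        .inr (.inr ⟨lower m - lower d, by omega, by omega, by omega, ?_⟩)⟩
      rw [upper_eq_lower_add]
      ext <;> dsimp only <;> omega
  · have : upper m + d ≠ lower m := fun h => hp ⟨m, .inr (by rw [h])⟩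
    refine ⟨(upper m, lower m), ⟨m, .inr rfl⟩, .inr (.inl ⟨rfl, ?_⟩)⟩
    have := upper_eq_lower_add m
    dsimp only
    omega

theorem pPos_iff_mem_pairs (p : ℕ × ℕ) : PPos p ↔ p ∈ pairs :=
  pPos_iff_mem (fun _ hp _ hq => not_move_of_mem_pairs hp hq) (fun _ => exists_move_mem_pairs) p

theorem mem_pairs_iff_of_le {a b : ℕ} (hab : a ≤ b) :
    (a, b) ∈ pairs ↔ ∃ n, a = lower n ∧ b = upper n := by
  constructor
  · rintro ⟨n, h | h⟩ <;> simp only [Prod.ext_iff] at h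
    · exact ⟨n, h⟩
    · have := upper_eq_lower_add n
      exact ⟨n, by omega, by omega⟩
  · rintro ⟨n, rfl, rfl⟩
    exact ⟨n, .inl rfl⟩

end Wythoff

theorem wythoff_P_iff_wythoff_pair (a b : ℕ) (hab : a ≤ b) :
    Wythoff.PPos (a, b) ↔
      ∃ n : ℕ, (a : ℤ) = ⌊(n : ℝ) * phi⌋ ∧ (b : ℤ) = ⌊(n : ℝ) * phi ^ 2⌋ := by
  have hphi : phi = φ := rfl
  rw [Wythoff.pPos_iff_mem_pairs, Wythoff.mem_pairs_iff_of_le hab]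
  simp only [hphi, ← Wythoff.natCast_lower, ← Wythoff.natCast_upper, Nat.cast_inj]
end

section
/- In Twyst-off, for every nonnegative integer a, the position (a,a,a) is a P position. -/
namespace TwystOff

/-- Contraction: merge the two neighbors of an interior zero stack; delete empty end stacks. -/
def contract : List ℕ → List ℕ
  | [] => []
  | a :: t =>
    if a = 0 then contract t
    else match t with
      | [] => [a]
      | [b] => if b = 0 then [a] else [a, b]
      | b :: c :: r => if b = 0 then contract ((a + c) :: r) else a :: contract (b :: c :: r)
termination_by l => l.length

theorem contract_sum (l : List ℕ) : (contract l).sum = l.sum := by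
  induction l using contract.induct <;> rw [contract.eq_def] <;> simp_all <;> omega

/-- A raw move: remove `k > 0` tiles from an end stack, or `k` tiles from each of two
consecutive stacks; the result is then contracted. -/
def premove (p q : List ℕ) : Prop :=
  (∃ a t k, p = a :: t ∧ 0 < k ∧ k ≤ a ∧ q = contract ((a - k) :: t)) ∨
  (∃ a t k, p = t ++ [a] ∧ 0 < k ∧ k ≤ a ∧ q = contract (t ++ [a - k])) ∨
  (∃ α a b β k, p = α ++ a :: b :: β ∧ 0 < k ∧ k ≤ a ∧ k ≤ b ∧
      q = contract (α ++ (a - k) :: (b - k) :: β))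

/-- Moves of Twyst-off (positions are considered up to contraction). -/
def Move (p q : List ℕ) : Prop := premove (contract p) q

theorem Move.sum_lt {p q : List ℕ} (h : Move p q) : q.sum < p.sum := by
  rw [← contract_sum p]
  rcases h with ⟨a, t, k, hp, hk, hka, hq⟩ | ⟨a, t, k, hp, hk, hka, hq⟩ |
    ⟨α, a, b, β, k, hp, hk, hka, hkb, hq⟩ <;>
    subst hq <;> rw [contract_sum, hp] <;> simp [List.sum_append] <;> omega

/-- P positions: every option is an N position (i.e. no option is itself P). -/
def PPos (p : List ℕ) : Prop := ∀ q, Move p q → ¬ PPos q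
termination_by p.sum
decreasing_by exact Move.sum_lt (by assumption)

/-- N positions: some option is a P position. -/
def NPos (p : List ℕ) : Prop := ∃ q, Move p q ∧ PPos q

-- my lemmas
lemma contract1 {a : ℕ} (ha : a ≠ 0) : contract [a] = [a] := by simp [contract, ha]
lemma contract2 {a b : ℕ} (ha : a ≠ 0) (hb : b ≠ 0) : contract [a,b] = [a,b] := by
  simp [contract, ha, hb]
lemma contract3 {a b c : ℕ} (ha : a ≠ 0) (hb : b ≠ 0) (hc : c ≠ 0) :
    contract [a,b,c] = [a,b,c] := by simp [contract, ha, hb, hc]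

lemma ppos_nil : PPos [] := by
  rw [PPos]
  intro q hq
  rcases hq with ⟨x, t, k, hp, _⟩ | ⟨x, t, k, hp, _⟩ | ⟨α, x, y, β, k, hp, _⟩ <;>
    simp [contract] at hp

lemma not_ppos {p q : List ℕ} (h : Move p q) (hq : PPos q) : ¬ PPos p := by
  intro hp; rw [PPos] at hp; exact hp q h hq

lemma not_ppos_single {a : ℕ} (ha : a ≠ 0) : ¬ PPos [a] := by
  refine not_ppos (q := []) ?_ ppos_nil
  unfold Move
  rw [contract1 ha]
  exact Or.inl ⟨a, [], a, rfl, Nat.pos_of_ne_zero ha, le_rfl, by simp [contract]⟩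

lemma not_ppos_pair {a : ℕ} (ha : a ≠ 0) : ¬ PPos [a,a] := by
  refine not_ppos (q := []) ?_ ppos_nil
  unfold Move
  rw [contract2 ha ha]
  exact Or.inr (Or.inr ⟨[], a, a, [], a, rfl, Nat.pos_of_ne_zero ha, le_rfl, le_rfl,
    by simp [contract]⟩)

end TwystOff

theorem equal_triples_P (a : ℕ) : TwystOff.PPos [a, a, a] := by
  induction a using Nat.strong_induction_on with
  | _ a IH =>
  open TwystOff in
  rcases Nat.eq_zero_or_pos a with rfl | hapos
  · rw [PPos]
    intro q hq
    unfold Move at hq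
    rcases hq with ⟨x, t, k, hp, _⟩ | ⟨x, t, k, hp, _⟩ | ⟨α, x, y, β, k, hp, _⟩ <;>
      simp [contract] at hp
  · have ha : a ≠ 0 := hapos.ne'
    rw [PPos]
    intro q hq
    unfold Move at hq
    rw [contract3 ha ha ha] at hq
    -- helper: from [m, a, a] with 0 < m < a, move back to [m,m,m]
    have tripmove_left : ∀ m : ℕ, m ≠ 0 → m < a → ¬ PPos [m, a, a] := by
      intro m hm hma
      refine not_ppos (q := [m,m,m]) ?_ (IH m hma)
      unfold Move
      rw [contract3 hm ha ha]
      refine Or.inr (Or.inr ⟨[m], a, a, [], a - m, rfl, by omega, by omega, by omega, ?_⟩)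
      simp only [List.cons_append, List.nil_append]
      rw [show a - (a - m) = m by omega, contract3 hm hm hm]
    have tripmove_right : ∀ m : ℕ, m ≠ 0 → m < a → ¬ PPos [a, a, m] := by
      intro m hm hma
      refine not_ppos (q := [m,m,m]) ?_ (IH m hma)
      unfold Move
      rw [contract3 ha ha hm]
      refine Or.inr (Or.inr ⟨[], a, a, [m], a - m, rfl, by omega, by omega, by omega, ?_⟩)
      simp only [List.nil_append]
      rw [show a - (a - m) = m by omega, contract3 hm hm hm]
    have tripmove_endL : ∀ m : ℕ, m ≠ 0 → m < a → ¬ PPos [a, m, m] := by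
      intro m hm hma
      refine not_ppos (q := [m,m,m]) ?_ (IH m hma)
      unfold Move
      rw [contract3 ha hm hm]
      refine Or.inl ⟨a, [m, m], a - m, rfl, by omega, by omega, ?_⟩
      rw [show a - (a - m) = m by omega, contract3 hm hm hm]
    have tripmove_endR : ∀ m : ℕ, m ≠ 0 → m < a → ¬ PPos [m, m, a] := by
      intro m hm hma
      refine not_ppos (q := [m,m,m]) ?_ (IH m hma)
      unfold Move
      rw [contract3 hm hm ha]
      refine Or.inr (Or.inl ⟨a, [m, m], a - m, rfl, by omega, by omega, ?_⟩)
      simp only [List.cons_append, List.nil_append]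
      rw [show a - (a - m) = m by omega, contract3 hm hm hm]
    rcases hq with ⟨x, t, k, hp, hk, hka, rfl⟩ | ⟨x, t, k, hp, hk, hka, rfl⟩ |
      ⟨α, x, y, β, k, hp, hk, hkx, hky, rfl⟩
    · -- remove from left end
      obtain ⟨h1, h2⟩ : x = a ∧ t = [a, a] := by
        have := hp; simp only [List.cons.injEq] at this
        exact ⟨this.1.symm, this.2.symm⟩
      rw [h1, h2]
      by_cases hk2 : k = a
      · rw [show a - k = 0 by omega]
        rw [show contract [0, a, a] = [a, a] by simp [contract, ha]]
        exact not_ppos_pair ha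
      · have h1 : a - k ≠ 0 := by omega
        rw [contract3 h1 ha ha]
        exact tripmove_left _ h1 (by omega)
    · -- remove from right end
      rcases t with _ | ⟨b, _ | ⟨c, _ | ⟨d, t⟩⟩⟩
      · exact absurd hp (by simp)
      · exact absurd hp (by simp)
      case cons.cons.cons =>
        have := congrArg List.length hp
        simp at this
      obtain ⟨h1, h2, h3⟩ : b = a ∧ c = a ∧ x = a := by
        have := hp; simp only [List.cons.injEq, List.cons_append, List.nil_append,
          and_true] at this
        exact ⟨this.1.symm, this.2.1.symm, this.2.2.symm⟩
      rw [h1, h2, h3]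
      by_cases hk2 : k = a
      · rw [show a - k = 0 by omega]
        rw [show ([a, a] ++ [0] : List ℕ) = [a, a, 0] from rfl,
          show contract [a, a, 0] = [a, a] by simp [contract, ha]]
        exact not_ppos_pair ha
      · have h1 : a - k ≠ 0 := by omega
        rw [show [a, a] ++ [a - k] = [a, a, a - k] by rfl, contract3 ha ha h1]
        exact tripmove_right _ h1 (by omega)
    · -- remove from two consecutive
      rcases α with _ | ⟨u, _ | ⟨v, α'⟩⟩
      · obtain ⟨h1, h2, h3⟩ : x = a ∧ y = a ∧ β = [a] := by
          have := hp; simp only [List.nil_append, List.cons.injEq] at this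
          exact ⟨this.1.symm, this.2.1.symm, this.2.2.symm⟩
        rw [h1, h2, h3]
        by_cases hk2 : k = a
        · rw [show a - k = 0 by omega]
          rw [show ([] ++ 0 :: 0 :: [a] : List ℕ) = [0, 0, a] from rfl,
            show contract [0, 0, a] = [a] by simp [contract, ha]]
          exact not_ppos_single ha
        · have h1 : a - k ≠ 0 := by omega
          rw [show ([] ++ (a-k) :: (a-k) :: [a] : List ℕ) = [a-k, a-k, a] by rfl,
            contract3 h1 h1 ha]
          exact tripmove_endR _ h1 (by omega)
      · obtain ⟨h0, h1, h2, h3⟩ : u = a ∧ x = a ∧ y = a ∧ β = [] := by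
          have := hp
          simp only [List.cons_append, List.nil_append, List.cons.injEq] at this
          exact ⟨this.1.symm, this.2.1.symm, this.2.2.1.symm, this.2.2.2.symm⟩
        rw [h0, h1, h2, h3]
        by_cases hk2 : k = a
        · rw [show a - k = 0 by omega]
          rw [show ([a] ++ 0 :: 0 :: [] : List ℕ) = [a, 0, 0] from rfl,
            show contract [a, 0, 0] = [a] by simp [contract, ha]]
          exact not_ppos_single ha
        · have h1 : a - k ≠ 0 := by omega
          rw [show ([a] ++ (a-k) :: (a-k) :: [] : List ℕ) = [a, a-k, a-k] by rfl,
            contract3 ha h1 h1]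
          exact tripmove_endL _ h1 (by omega)
      · exfalso
        rcases α' with _ | ⟨w, α''⟩ <;> simp_all
end

section
/- Let S be the set of Twyst-off positions (s₁,...,sₙ) with every sᵢ ∈ {1,2} such that every maximal interior run of consecutive 1's has even length. Then every position in S whose total tile count is divisible by 3 is a P position, and every position in S whose total tile count is not divisible by 3 is an N position. -/
lemma ppos_iff (p : List ℕ) : TwystOff.PPos p ↔ ∀ q, TwystOff.Move p q → ¬ TwystOff.PPos q := by
  rw [TwystOff.PPos]
open TwystOff

namespace TwystAux

/-- Lists of 1s and 2s in which every run of 1s that is followed by a 2 has even length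
(the constraint that applies immediately after a 2, or at the left end... here: after a 2). -/
inductive W : List ℕ → Prop
  | nil : W []
  | one : W [1]
  | two (t) : W t → W (2 :: t)
  | pair (t) : W t → W (1 :: 1 :: t)

/-- Lists of 1s and 2s whose interior runs of 1s are all even. -/
inductive SP : List ℕ → Prop
  | nil : SP []
  | cons1 (t) : SP t → SP (1 :: t)
  | two (t) : W t → SP (2 :: t)

lemma winv2 {t : List ℕ} (h : W (2 :: t)) : W t := by
  cases h; assumption

lemma winv11 {t : List ℕ} (h : W (1 :: 1 :: t)) : W t := by
  cases h; assumption

lemma winv12 {t : List ℕ} (h : W (1 :: 2 :: t)) : False := by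
  cases h

lemma spinv1 {t : List ℕ} (h : SP (1 :: t)) : SP t := by
  cases h; assumption

lemma spinv2 {t : List ℕ} (h : SP (2 :: t)) : W t := by
  cases h; assumption

lemma w_sp {l : List ℕ} (h : W l) : SP l := by
  induction h with
  | nil => exact SP.nil
  | one => exact SP.cons1 _ SP.nil
  | two t ht => exact SP.two _ ht
  | pair t _ ih => exact SP.cons1 _ (SP.cons1 _ ih)

lemma w_mem {l : List ℕ} (h : W l) : ∀ x ∈ l, x = 1 ∨ x = 2 := by
  induction h with
  | nil => simp
  | one => simp
  | two t _ ih =>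
    intro x hx
    rcases List.mem_cons.1 hx with rfl | hx
    · right; rfl
    · exact ih x hx
  | pair t _ ih =>
    intro x hx
    rcases List.mem_cons.1 hx with rfl | hx
    · left; rfl
    · rcases List.mem_cons.1 hx with rfl | hx
      · left; rfl
      · exact ih x hx

lemma sp_mem {l : List ℕ} (h : SP l) : ∀ x ∈ l, x = 1 ∨ x = 2 := by
  induction h with
  | nil => simp
  | cons1 t _ ih =>
    intro x hx
    rcases List.mem_cons.1 hx with rfl | hx
    · left; rfl
    · exact ih x hx
  | two t ht =>
    intro x hx
    rcases List.mem_cons.1 hx with rfl | hx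
    · right; rfl
    · exact w_mem ht x hx

lemma sp_pos {l : List ℕ} (h : SP l) : ∀ x ∈ l, x ≠ 0 := by
  intro x hx; rcases sp_mem h x hx with rfl | rfl <;> simp

end TwystAux
namespace TwystAux

lemma ct_zero (t : List ℕ) : TwystOff.contract (0 :: t) = TwystOff.contract t := by
  rw [TwystOff.contract.eq_def]; simp

lemma contract_pos (l : List ℕ) (h : ∀ x ∈ l, x ≠ 0) : TwystOff.contract l = l := by
  induction l using TwystOff.contract.induct <;> rw [TwystOff.contract.eq_def] <;> simp_all

lemma contract_nil : TwystOff.contract [] = [] := by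
  rw [TwystOff.contract.eq_def]

lemma ct_cons' (a b : ℕ) (m : List ℕ) (ha : a ≠ 0) (hb : b ≠ 0) :
    TwystOff.contract (a :: b :: m) = a :: TwystOff.contract (b :: m) := by
  cases m with
  | nil =>
    rw [TwystOff.contract.eq_def]
    simp [ha, hb]
    rw [TwystOff.contract.eq_def]
    simp [hb]
  | cons c r =>
    rw [TwystOff.contract.eq_def]
    simp [ha, hb]

lemma ct_merge0 (a c : ℕ) (ha : a ≠ 0) (r : List ℕ) :
    TwystOff.contract (a :: 0 :: c :: r) = TwystOff.contract ((a + c) :: r) := by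
  rw [TwystOff.contract.eq_def]; simp [ha]

lemma ct_endzero : ∀ (α : List ℕ), (∀ x ∈ α, x ≠ 0) → TwystOff.contract (α ++ [0]) = α := by
  intro α
  induction α with
  | nil =>
    intro _
    rw [show ([] : List ℕ) ++ [0] = [0] by simp, ct_zero, contract_nil]
  | cons a α' ih =>
    intro h
    have ha : a ≠ 0 := h a (by simp)
    cases α' with
    | nil =>
      rw [TwystOff.contract.eq_def]; simp [ha]
    | cons b α'' =>
      have hb : b ≠ 0 := h b (by simp)
      simp only [List.cons_append]
      rw [ct_cons' a b (α'' ++ [0]) ha hb]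
      have := ih (fun x hx => h x (by simp [hx]))
      simp only [List.cons_append] at this
      rw [this]

lemma ct_twozero : ∀ (α β : List ℕ), (∀ x ∈ α, x ≠ 0) → (∀ x ∈ β, x ≠ 0) →
    TwystOff.contract (α ++ 0 :: 0 :: β) = α ++ β := by
  intro α
  induction α with
  | nil =>
    intro β _ hβ
    simp only [List.nil_append]
    rw [ct_zero, ct_zero, contract_pos β hβ]
  | cons a α' ih =>
    intro β h hβ
    have ha : a ≠ 0 := h a (by simp)
    cases α' with
    | nil =>
      simp only [List.cons_append, List.nil_append]
      rw [ct_merge0 a 0 ha β]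
      simp only [Nat.add_zero]
      rw [contract_pos (a :: β) (by intro x hx; rcases List.mem_cons.1 hx with rfl | hx; exact ha; exact hβ x hx)]
    | cons b α'' =>
      have hb : b ≠ 0 := h b (by simp)
      simp only [List.cons_append]
      rw [ct_cons' a b (α'' ++ 0 :: 0 :: β) ha hb]
      have := ih β (fun x hx => h x (by simp [hx])) hβ
      simp only [List.cons_append] at this
      rw [this]

lemma ct_merge : ∀ (α : List ℕ) (x y : ℕ) (β : List ℕ), (∀ a ∈ α, a ≠ 0) → x ≠ 0 → y ≠ 0 →
    (∀ a ∈ β, a ≠ 0) →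
    TwystOff.contract (α ++ x :: 0 :: y :: β) = α ++ (x + y) :: β := by
  intro α
  induction α with
  | nil =>
    intro x y β _ hx hy hβ
    simp only [List.nil_append]
    rw [ct_merge0 x y hx β]
    rw [contract_pos ((x+y) :: β) (by intro a ha; rcases List.mem_cons.1 ha with rfl | ha; exacts [by omega, hβ a ha])]
  | cons a α' ih =>
    intro x y β h hx hy hβ
    have ha : a ≠ 0 := h a (by simp)
    cases α' with
    | nil =>
      simp only [List.cons_append, List.nil_append]
      rw [ct_cons' a x (0 :: y :: β) ha hx]
      have := ih x y β (by simp) hx hy hβ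
      simp only [List.nil_append] at this
      rw [this]
    | cons b α'' =>
      have hb : b ≠ 0 := h b (by simp)
      simp only [List.cons_append]
      rw [ct_cons' a b (α'' ++ x :: 0 :: y :: β) ha hb]
      have := ih x y β (fun z hz => h z (by simp [hz])) hx hy hβ
      simp only [List.cons_append] at this
      rw [this]

end TwystAux
namespace TwystAux

lemma WG1 : ∀ {l : List ℕ}, W l → ∀ t, l = t ++ [1] → W t := by
  intro l h
  induction h with
  | nil => intro t he; exact absurd he (by simp)
  | one =>
    intro t he
    cases t with
    | nil => exact W.nil
    | cons a t' => simp only [List.cons_append, List.cons.injEq] at he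
                   obtain ⟨rfl, he⟩ := he
                   exact absurd he (by simp)
  | two s hs ih =>
    intro t he
    cases t with
    | nil => simp at he
    | cons a t' =>
      simp only [List.cons_append, List.cons.injEq] at he
      obtain ⟨rfl, he⟩ := he
      exact W.two _ (ih t' he)
  | pair s hs ih =>
    intro t he
    cases t with
    | nil => simp at he
    | cons a t' =>
      cases t' with
      | nil =>
        simp only [List.cons_append, List.nil_append, List.cons.injEq] at he
        obtain ⟨rfl, -, rfl⟩ := he
        exact W.one
      | cons b t'' =>
        simp only [List.cons_append, List.cons.injEq] at he
        obtain ⟨rfl, rfl, he⟩ := he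
        exact W.pair _ (ih t'' he)

lemma WG2 : ∀ {l : List ℕ}, W l → ∀ t, l = t ++ [2] → W (t ++ [1]) := by
  intro l h
  induction h with
  | nil => intro t he; exact absurd he (by simp)
  | one =>
    intro t he
    cases t with
    | nil => simp at he
    | cons a t' => simp only [List.cons_append, List.cons.injEq] at he
                   obtain ⟨rfl, he⟩ := he
                   exact absurd he (by simp)
  | two s hs ih =>
    intro t he
    cases t with
    | nil =>
      simp only [List.nil_append, List.cons.injEq] at he
      obtain ⟨-, rfl⟩ := he
      exact W.one
    | cons a t' =>
      simp only [List.cons_append, List.cons.injEq] at he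
      obtain ⟨rfl, he⟩ := he
      exact W.two _ (ih t' he)
  | pair s hs ih =>
    intro t he
    cases t with
    | nil => simp at he
    | cons a t' =>
      cases t' with
      | nil =>
        simp only [List.cons_append, List.nil_append, List.cons.injEq] at he
        obtain ⟨rfl, he, -⟩ := he
        exact absurd he (by simp)
      | cons b t'' =>
        simp only [List.cons_append, List.cons.injEq] at he
        obtain ⟨rfl, rfl, he⟩ := he
        exact W.pair _ (ih t'' he)

lemma WG3 : ∀ {l : List ℕ}, W l → ∀ t, l = t ++ [2] → W t := by
  intro l h
  induction h with
  | nil => intro t he; exact absurd he (by simp)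
  | one =>
    intro t he
    cases t with
    | nil => simp at he
    | cons a t' => simp only [List.cons_append, List.cons.injEq] at he
                   obtain ⟨rfl, he⟩ := he
                   exact absurd he (by simp)
  | two s hs ih =>
    intro t he
    cases t with
    | nil => exact W.nil
    | cons a t' =>
      simp only [List.cons_append, List.cons.injEq] at he
      obtain ⟨rfl, he⟩ := he
      exact W.two _ (ih t' he)
  | pair s hs ih =>
    intro t he
    cases t with
    | nil => simp at he
    | cons a t' =>
      cases t' with
      | nil =>
        simp only [List.cons_append, List.nil_append, List.cons.injEq] at he
        obtain ⟨rfl, he, -⟩ := he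
        exact absurd he (by simp)
      | cons b t'' =>
        simp only [List.cons_append, List.cons.injEq] at he
        obtain ⟨rfl, rfl, he⟩ := he
        exact W.pair _ (ih t'' he)

lemma WA : ∀ {l : List ℕ}, W l → ∀ α β, l = α ++ 1 :: 1 :: β → W (α ++ β) := by
  intro l h
  induction h with
  | nil => intro α β he; exact absurd he (by simp)
  | one =>
    intro α β he
    have := congrArg List.length he
    simp at this
    omega
  | two s hs ih =>
    intro α β he
    cases α with
    | nil => simp at he
    | cons a α' =>
      simp only [List.cons_append, List.cons.injEq] at he
      obtain ⟨rfl, he⟩ := he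
      simp only [List.cons_append]
      exact W.two _ (ih α' β he)
  | pair s hs ih =>
    intro α β he
    cases α with
    | nil =>
      simp only [List.nil_append, List.cons.injEq, true_and] at he
      subst he
      simpa using hs
    | cons a α' =>
      cases α' with
      | nil =>
        simp only [List.cons_append, List.nil_append, List.cons.injEq, true_and] at he
        obtain ⟨rfl, he⟩ := he
        subst he
        simpa using hs
      | cons b α'' =>
        simp only [List.cons_append, List.cons.injEq] at he
        obtain ⟨rfl, rfl, he⟩ := he
        simp only [List.cons_append]
        exact W.pair _ (ih α'' β he)

lemma WB : ∀ {l : List ℕ}, W l → ∀ α β, l = α ++ 2 :: 2 :: β → W (α ++ β) := by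
  intro l h
  induction h with
  | nil => intro α β he; exact absurd he (by simp)
  | one =>
    intro α β he
    have := congrArg List.length he
    simp at this
    omega
  | two s hs ih =>
    intro α β he
    cases α with
    | nil =>
      simp only [List.nil_append, List.cons.injEq, true_and] at he
      subst he
      simpa using winv2 hs
    | cons a α' =>
      simp only [List.cons_append, List.cons.injEq] at he
      obtain ⟨rfl, he⟩ := he
      simp only [List.cons_append]
      exact W.two _ (ih α' β he)
  | pair s hs ih =>
    intro α β he
    cases α with
    | nil => simp at he
    | cons a α' =>
      cases α' with
      | nil => simp at he
      | cons b α'' =>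
        simp only [List.cons_append, List.cons.injEq] at he
        obtain ⟨rfl, rfl, he⟩ := he
        simp only [List.cons_append]
        exact W.pair _ (ih α'' β he)

lemma WC : ∀ {l : List ℕ}, W l → ∀ α β, l = α ++ 2 :: 2 :: β → W (α ++ 1 :: 1 :: β) := by
  intro l h
  induction h with
  | nil => intro α β he; exact absurd he (by simp)
  | one =>
    intro α β he
    have := congrArg List.length he
    simp at this
    omega
  | two s hs ih =>
    intro α β he
    cases α with
    | nil =>
      simp only [List.nil_append, List.cons.injEq, true_and] at he
      subst he
      exact W.pair _ (winv2 hs)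
    | cons a α' =>
      simp only [List.cons_append, List.cons.injEq] at he
      obtain ⟨rfl, he⟩ := he
      simp only [List.cons_append]
      exact W.two _ (ih α' β he)
  | pair s hs ih =>
    intro α β he
    cases α with
    | nil => simp at he
    | cons a α' =>
      cases α' with
      | nil => simp at he
      | cons b α'' =>
        simp only [List.cons_append, List.cons.injEq] at he
        obtain ⟨rfl, rfl, he⟩ := he
        simp only [List.cons_append]
        exact W.pair _ (ih α'' β he)

lemma WD : ∀ {l : List ℕ}, W l → ∀ α β, l = α ++ 1 :: 1 :: 2 :: β → W (α ++ 2 :: β) := by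
  intro l h
  induction h with
  | nil => intro α β he; exact absurd he (by simp)
  | one =>
    intro α β he
    have := congrArg List.length he
    simp at this
    omega
  | two s hs ih =>
    intro α β he
    cases α with
    | nil => simp at he
    | cons a α' =>
      simp only [List.cons_append, List.cons.injEq] at he
      obtain ⟨rfl, he⟩ := he
      simp only [List.cons_append]
      exact W.two _ (ih α' β he)
  | pair s hs ih =>
    intro α β he
    cases α with
    | nil =>
      simp only [List.nil_append, List.cons.injEq, true_and] at he
      subst he
      simpa using hs
    | cons a α' =>
      cases α' with
      | nil =>
        simp only [List.cons_append, List.nil_append, List.cons.injEq, true_and] at he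
        obtain ⟨rfl, he⟩ := he
        subst he
        simpa using hs
      | cons b α'' =>
        simp only [List.cons_append, List.cons.injEq] at he
        obtain ⟨rfl, rfl, he⟩ := he
        simp only [List.cons_append]
        exact W.pair _ (ih α'' β he)

lemma WE : ∀ {l : List ℕ}, W l → ∀ α β, l = α ++ 2 :: 1 :: 1 :: β → W (α ++ 2 :: β) := by
  intro l h
  induction h with
  | nil => intro α β he; exact absurd he (by simp)
  | one =>
    intro α β he
    have := congrArg List.length he
    simp at this
    omega
  | two s hs ih =>
    intro α β he
    cases α with
    | nil =>
      simp only [List.nil_append, List.cons.injEq, true_and] at he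
      subst he
      exact W.two _ (winv11 hs)
    | cons a α' =>
      simp only [List.cons_append, List.cons.injEq] at he
      obtain ⟨rfl, he⟩ := he
      simp only [List.cons_append]
      exact W.two _ (ih α' β he)
  | pair s hs ih =>
    intro α β he
    cases α with
    | nil => simp at he
    | cons a α' =>
      cases α' with
      | nil => simp at he
      | cons b α'' =>
        simp only [List.cons_append, List.cons.injEq] at he
        obtain ⟨rfl, rfl, he⟩ := he
        simp only [List.cons_append]
        exact W.pair _ (ih α'' β he)

lemma WF : ∀ {l : List ℕ}, W l → ∀ α β, l = α ++ 2 :: 1 :: 2 :: β → False := by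
  intro l h
  induction h with
  | nil => intro α β he; exact absurd he (by simp)
  | one =>
    intro α β he
    have := congrArg List.length he
    simp at this
    omega
  | two s hs ih =>
    intro α β he
    cases α with
    | nil =>
      simp only [List.nil_append, List.cons.injEq, true_and] at he
      subst he
      exact winv12 hs
    | cons a α' =>
      simp only [List.cons_append, List.cons.injEq] at he
      obtain ⟨rfl, he⟩ := he
      exact ih α' β he
  | pair s hs ih =>
    intro α β he
    cases α with
    | nil => simp at he
    | cons a α' =>
      cases α' with
      | nil => simp at he
      | cons b α'' =>
        simp only [List.cons_append, List.cons.injEq] at he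
        obtain ⟨rfl, rfl, he⟩ := he
        exact ih α'' β he

end TwystAux
namespace TwystAux

lemma S2 {t : List ℕ} (h : SP (2 :: t)) : SP (1 :: t) := SP.cons1 _ (w_sp (spinv2 h))

lemma S3 {t : List ℕ} (h : SP (2 :: t)) : SP t := w_sp (spinv2 h)

lemma S4 : ∀ {l : List ℕ}, SP l → ∀ t, l = t ++ [1] → SP t := by
  intro l h
  induction h with
  | nil => intro t he; exact absurd he (by simp)
  | cons1 s hs ih =>
    intro t he
    cases t with
    | nil => exact SP.nil
    | cons a t' =>
      simp only [List.cons_append, List.cons.injEq] at he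
      obtain ⟨rfl, he⟩ := he
      exact SP.cons1 _ (ih t' he)
  | two s hs =>
    intro t he
    cases t with
    | nil => simp at he
    | cons a t' =>
      simp only [List.cons_append, List.cons.injEq] at he
      obtain ⟨rfl, he⟩ := he
      exact SP.two _ (WG1 hs t' he)

lemma S5 : ∀ {l : List ℕ}, SP l → ∀ t, l = t ++ [2] → SP (t ++ [1]) := by
  intro l h
  induction h with
  | nil => intro t he; exact absurd he (by simp)
  | cons1 s hs ih =>
    intro t he
    cases t with
    | nil => simp at he
    | cons a t' =>
      simp only [List.cons_append, List.cons.injEq] at he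
      obtain ⟨rfl, he⟩ := he
      exact SP.cons1 _ (ih t' he)
  | two s hs =>
    intro t he
    cases t with
    | nil => exact SP.cons1 _ SP.nil
    | cons a t' =>
      simp only [List.cons_append, List.cons.injEq] at he
      obtain ⟨rfl, he⟩ := he
      exact SP.two _ (WG2 hs t' he)

lemma S6 : ∀ {l : List ℕ}, SP l → ∀ t, l = t ++ [2] → SP t := by
  intro l h
  induction h with
  | nil => intro t he; exact absurd he (by simp)
  | cons1 s hs ih =>
    intro t he
    cases t with
    | nil => simp at he
    | cons a t' =>
      simp only [List.cons_append, List.cons.injEq] at he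
      obtain ⟨rfl, he⟩ := he
      exact SP.cons1 _ (ih t' he)
  | two s hs =>
    intro t he
    cases t with
    | nil => exact SP.nil
    | cons a t' =>
      simp only [List.cons_append, List.cons.injEq] at he
      obtain ⟨rfl, he⟩ := he
      exact SP.two _ (WG3 hs t' he)

lemma S7 : ∀ {l : List ℕ}, SP l → ∀ α β, l = α ++ 1 :: 1 :: β → SP (α ++ β) := by
  intro l h
  induction h with
  | nil => intro α β he; exact absurd he (by simp)
  | cons1 s hs ih =>
    intro α β he
    cases α with
    | nil =>
      simp only [List.nil_append, List.cons.injEq, true_and] at he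
      subst he
      simpa using spinv1 hs
    | cons a α' =>
      simp only [List.cons_append, List.cons.injEq] at he
      obtain ⟨rfl, he⟩ := he
      simp only [List.cons_append]
      exact SP.cons1 _ (ih α' β he)
  | two s hs =>
    intro α β he
    cases α with
    | nil => simp at he
    | cons a α' =>
      simp only [List.cons_append, List.cons.injEq] at he
      obtain ⟨rfl, he⟩ := he
      simp only [List.cons_append]
      exact SP.two _ (WA hs α' β he)

lemma S8 : ∀ {l : List ℕ}, SP l → ∀ α β, l = α ++ 2 :: 2 :: β → SP (α ++ β) := by
  intro l h
  induction h with
  | nil => intro α β he; exact absurd he (by simp)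
  | cons1 s hs ih =>
    intro α β he
    cases α with
    | nil => simp at he
    | cons a α' =>
      simp only [List.cons_append, List.cons.injEq] at he
      obtain ⟨rfl, he⟩ := he
      simp only [List.cons_append]
      exact SP.cons1 _ (ih α' β he)
  | two s hs =>
    intro α β he
    cases α with
    | nil =>
      simp only [List.nil_append, List.cons.injEq, true_and] at he
      subst he
      simpa using w_sp (winv2 hs)
    | cons a α' =>
      simp only [List.cons_append, List.cons.injEq] at he
      obtain ⟨rfl, he⟩ := he
      simp only [List.cons_append]
      exact SP.two _ (WB hs α' β he)

lemma S9 : ∀ {l : List ℕ}, SP l → ∀ α β, l = α ++ 2 :: 2 :: β → SP (α ++ 1 :: 1 :: β) := by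
  intro l h
  induction h with
  | nil => intro α β he; exact absurd he (by simp)
  | cons1 s hs ih =>
    intro α β he
    cases α with
    | nil => simp at he
    | cons a α' =>
      simp only [List.cons_append, List.cons.injEq] at he
      obtain ⟨rfl, he⟩ := he
      simp only [List.cons_append]
      exact SP.cons1 _ (ih α' β he)
  | two s hs =>
    intro α β he
    cases α with
    | nil =>
      simp only [List.nil_append, List.cons.injEq, true_and] at he
      subst he
      exact SP.cons1 _ (SP.cons1 _ (w_sp (winv2 hs)))
    | cons a α' =>
      simp only [List.cons_append, List.cons.injEq] at he
      obtain ⟨rfl, he⟩ := he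
      simp only [List.cons_append]
      exact SP.two _ (WC hs α' β he)

lemma S10 : ∀ {l : List ℕ}, SP l → ∀ α β, l = α ++ 1 :: 1 :: 2 :: β → SP (α ++ 2 :: β) := by
  intro l h
  induction h with
  | nil => intro α β he; exact absurd he (by simp)
  | cons1 s hs ih =>
    intro α β he
    cases α with
    | nil =>
      simp only [List.nil_append, List.cons.injEq, true_and] at he
      subst he
      simpa using spinv1 hs
    | cons a α' =>
      simp only [List.cons_append, List.cons.injEq] at he
      obtain ⟨rfl, he⟩ := he
      simp only [List.cons_append]
      exact SP.cons1 _ (ih α' β he)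
  | two s hs =>
    intro α β he
    cases α with
    | nil => simp at he
    | cons a α' =>
      simp only [List.cons_append, List.cons.injEq] at he
      obtain ⟨rfl, he⟩ := he
      simp only [List.cons_append]
      exact SP.two _ (WD hs α' β he)

lemma S11 : ∀ {l : List ℕ}, SP l → ∀ α β, l = α ++ 2 :: 1 :: 1 :: β → SP (α ++ 2 :: β) := by
  intro l h
  induction h with
  | nil => intro α β he; exact absurd he (by simp)
  | cons1 s hs ih =>
    intro α β he
    cases α with
    | nil => simp at he
    | cons a α' =>
      simp only [List.cons_append, List.cons.injEq] at he
      obtain ⟨rfl, he⟩ := he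
      simp only [List.cons_append]
      exact SP.cons1 _ (ih α' β he)
  | two s hs =>
    intro α β he
    cases α with
    | nil =>
      simp only [List.nil_append, List.cons.injEq, true_and] at he
      subst he
      exact SP.two _ (winv11 hs)
    | cons a α' =>
      simp only [List.cons_append, List.cons.injEq] at he
      obtain ⟨rfl, he⟩ := he
      simp only [List.cons_append]
      exact SP.two _ (WE hs α' β he)

lemma S12 : ∀ {l : List ℕ}, SP l → ∀ α β, l = α ++ 2 :: 1 :: 2 :: β → False := by
  intro l h
  induction h with
  | nil => intro α β he; exact absurd he (by simp)
  | cons1 s hs ih =>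
    intro α β he
    cases α with
    | nil => simp at he
    | cons a α' =>
      simp only [List.cons_append, List.cons.injEq] at he
      obtain ⟨rfl, he⟩ := he
      exact ih α' β he
  | two s hs =>
    intro α β he
    cases α with
    | nil =>
      simp only [List.nil_append, List.cons.injEq, true_and] at he
      subst he
      exact winv12 hs
    | cons a α' =>
      simp only [List.cons_append, List.cons.injEq] at he
      obtain ⟨rfl, he⟩ := he
      exact WF hs α' β he

end TwystAux
namespace TwystAux

lemma w_pos {l : List ℕ} (h : W l) : ∀ x ∈ l, x ≠ 0 := sp_pos (w_sp h)

lemma move_sp {l q : List ℕ} (hl : SP l) (h : TwystOff.Move l q) :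
    SP q ∧ (l.sum = q.sum + 1 ∨ l.sum = q.sum + 2 ∨ l.sum = q.sum + 4) := by
  have hpos : ∀ x ∈ l, x ≠ 0 := sp_pos hl
  have h' : TwystOff.premove l q := by
    unfold TwystOff.Move at h
    rwa [contract_pos l hpos] at h
  rcases h' with ⟨a, t, k, hp, hk1, hk2, hq⟩ | ⟨a, t, k, hp, hk1, hk2, hq⟩ |
    ⟨α, a, b, β, k, hp, hk1, hk2, hk3, hq⟩
  · -- left end
    subst hp
    have hposT : ∀ x ∈ t, x ≠ 0 := fun x hx => hpos x (by simp [hx])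
    rcases sp_mem hl a (by simp) with rfl | rfl
    · have hk : k = 1 := by omega
      subst hk
      have hq' : q = t := by
        rw [hq, show (1:ℕ)-1 = 0 by norm_num, ct_zero, contract_pos t hposT]
      subst hq'
      exact ⟨spinv1 hl, by simp only [List.sum_cons, List.sum_append, List.sum_nil]; omega⟩
    · rcases (show k = 1 ∨ k = 2 by omega) with rfl | rfl
      · have hq' : q = 1 :: t := by
          rw [hq, show (2:ℕ)-1 = 1 by norm_num,
            contract_pos (1::t) (by
              intro x hx
              rcases List.mem_cons.1 hx with rfl | hx
              · simp
              · exact hposT x hx)]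
        subst hq'
        exact ⟨S2 hl, by simp only [List.sum_cons, List.sum_append, List.sum_nil]; omega⟩
      · have hq' : q = t := by
          rw [hq, show (2:ℕ)-2 = 0 by norm_num, ct_zero, contract_pos t hposT]
        subst hq'
        exact ⟨S3 hl, by simp only [List.sum_cons, List.sum_append, List.sum_nil]; omega⟩
  · -- right end
    subst hp
    have hposT : ∀ x ∈ t, x ≠ 0 := fun x hx => hpos x (by simp [hx])
    rcases sp_mem hl a (by simp) with rfl | rfl
    · have hk : k = 1 := by omega
      subst hk
      have hq' : q = t := by
        rw [hq, show (1:ℕ)-1 = 0 by norm_num, ct_endzero t hposT]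
      rw [hq']
      exact ⟨S4 hl t rfl, by simp only [List.sum_cons, List.sum_append, List.sum_nil]; omega⟩
    · rcases (show k = 1 ∨ k = 2 by omega) with rfl | rfl
      · have hq' : q = t ++ [1] := by
          rw [hq, show (2:ℕ)-1 = 1 by norm_num,
            contract_pos (t++[1]) (by
              intro x hx
              rcases List.mem_append.1 hx with hx | hx
              · exact hposT x hx
              · simp at hx; omega)]
        rw [hq']
        exact ⟨S5 hl t rfl, by simp only [List.sum_cons, List.sum_append, List.sum_nil]; omega⟩
      · have hq' : q = t := by
          rw [hq, show (2:ℕ)-2 = 0 by norm_num, ct_endzero t hposT]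
        rw [hq']
        exact ⟨S6 hl t rfl, by simp only [List.sum_cons, List.sum_append, List.sum_nil]; omega⟩
  · -- pair move
    subst hp
    have hposA : ∀ x ∈ α, x ≠ 0 := fun x hx => hpos x (by simp [hx])
    have hposB : ∀ x ∈ β, x ≠ 0 := fun x hx => hpos x (by simp [hx])
    rcases sp_mem hl a (by simp) with rfl | rfl <;> rcases sp_mem hl b (by simp) with rfl | rfl
    · -- (1,1), k = 1
      have hk : k = 1 := by omega
      subst hk
      have hq' : q = α ++ β := by
        rw [hq, show (1:ℕ)-1 = 0 by norm_num, ct_twozero α β hposA hposB]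
      subst hq'
      exact ⟨S7 hl α β rfl, by simp only [List.sum_cons, List.sum_append, List.sum_nil]; omega⟩
    · -- (1,2), k = 1
      have hk : k = 1 := by omega
      subst hk
      rcases List.eq_nil_or_concat α with rfl | ⟨α', x, hx⟩
      · have hq' : q = 1 :: β := by
          rw [hq, show (1:ℕ)-1 = 0 by norm_num, show (2:ℕ)-1 = 1 by norm_num]
          simp only [List.nil_append]
          rw [ct_zero, contract_pos (1::β) (by
            intro x hx
            rcases List.mem_cons.1 hx with rfl | hx
            · simp
            · exact hposB x hx)]
        subst hq'
        refine ⟨SP.cons1 _ (S3 (spinv1 hl)), by simp only [List.sum_cons, List.sum_append, List.sum_nil]; omega⟩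
      · rw [List.concat_eq_append] at hx
        subst hx
        rcases sp_mem hl x (by simp) with rfl | rfl
        · have hq' : q = α' ++ 2 :: β := by
            rw [hq, show (1:ℕ)-1 = 0 by norm_num, show (2:ℕ)-1 = 1 by norm_num,
              show (α'++[1]) ++ 0::1::β = α' ++ 1::0::1::β by simp,
              ct_merge α' 1 1 β (fun z hz => hposA z (by simp [hz])) one_ne_zero one_ne_zero hposB]
          subst hq'
          exact ⟨S10 hl α' β (by simp), by simp only [List.sum_cons, List.sum_append, List.sum_nil]; omega⟩
        · exact (S12 hl α' β (by simp)).elim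
    · -- (2,1), k = 1
      have hk : k = 1 := by omega
      subst hk
      cases β with
      | nil =>
        have hq' : q = α ++ [1] := by
          rw [hq, show (2:ℕ)-1 = 1 by norm_num, show (1:ℕ)-1 = 0 by norm_num,
            show α ++ [1, 0] = (α ++ [1]) ++ [0] by simp,
            ct_endzero (α++[1]) (by
              intro z hz
              rcases List.mem_append.1 hz with hz | hz
              · exact hposA z hz
              · simp at hz; omega)]
        subst hq'
        refine ⟨S5 (S4 hl (α ++ [2]) (by simp)) α rfl, by simp only [List.sum_cons, List.sum_append, List.sum_nil]; omega⟩
      | cons y β' =>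
        have hposB' : ∀ z ∈ β', z ≠ 0 := fun z hz => hposB z (by simp [hz])
        rcases sp_mem hl y (by simp) with rfl | rfl
        · have hq' : q = α ++ 2 :: β' := by
            rw [hq, show (2:ℕ)-1 = 1 by norm_num, show (1:ℕ)-1 = 0 by norm_num,
              ct_merge α 1 1 β' hposA one_ne_zero one_ne_zero hposB']
          subst hq'
          exact ⟨S11 hl α β' (by simp), by simp only [List.sum_cons, List.sum_append, List.sum_nil]; omega⟩
        · exact (S12 hl α β' (by simp)).elim
    · -- (2,2)
      rcases (show k = 1 ∨ k = 2 by omega) with rfl | rfl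
      · have hq' : q = α ++ 1 :: 1 :: β := by
          rw [hq, show (2:ℕ)-1 = 1 by norm_num,
            contract_pos _ (by
              intro z hz
              rcases List.mem_append.1 hz with hz | hz
              · exact hposA z hz
              · rcases List.mem_cons.1 hz with rfl | hz
                · simp
                · rcases List.mem_cons.1 hz with rfl | hz
                  · simp
                  · exact hposB z hz)]
        subst hq'
        exact ⟨S9 hl α β rfl, by simp only [List.sum_cons, List.sum_append, List.sum_nil]; omega⟩
      · have hq' : q = α ++ β := by
          rw [hq, show (2:ℕ)-2 = 0 by norm_num, ct_twozero α β hposA hposB]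
        subst hq'
        exact ⟨S8 hl α β rfl, by simp only [List.sum_cons, List.sum_append, List.sum_nil]; omega⟩

lemma lemB {l : List ℕ} (h : SP l) (hs : l.sum % 3 ≠ 0) :
    ∃ q, TwystOff.Move l q ∧ SP q ∧ q.sum % 3 = 0 := by
  have hpos := sp_pos h
  have hc : TwystOff.contract l = l := contract_pos l hpos
  cases h with
  | nil => simp at hs
  | cons1 t ht =>
    have hposT : ∀ x ∈ t, x ≠ 0 := fun x hx => hpos x (by simp [hx])
    by_cases h1 : (1 + t.sum) % 3 = 1
    · refine ⟨t, ?_, ht, by omega⟩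
      show TwystOff.premove (TwystOff.contract (1::t)) t
      rw [hc]
      exact Or.inl ⟨1, t, 1, rfl, by omega, le_rfl,
        by rw [show (1:ℕ)-1 = 0 by norm_num, ct_zero, contract_pos t hposT]⟩
    · have h2 : (1 + t.sum) % 3 = 2 := by
        simp only [List.sum_cons] at hs; omega
      cases ht with
      | nil => simp at h2
      | cons1 u hu =>
        have hposU : ∀ x ∈ u, x ≠ 0 := fun x hx => hpos x (by simp [hx])
        refine ⟨u, ?_, hu, by simp only [List.sum_cons] at h2; omega⟩
        show TwystOff.premove (TwystOff.contract (1::1::u)) u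
        rw [hc]
        refine Or.inr (Or.inr ⟨[], 1, 1, u, 1, by simp, by omega, le_rfl, le_rfl, ?_⟩)
        rw [show (1:ℕ)-1 = 0 by norm_num]
        simp only [List.nil_append]
        rw [ct_zero, ct_zero, contract_pos u hposU]
      | two u hw =>
        have hposU : ∀ x ∈ u, x ≠ 0 := fun x hx => hpos x (by simp [hx])
        refine ⟨1 :: u, ?_, SP.cons1 _ (w_sp hw), by simp only [List.sum_cons] at h2 ⊢; omega⟩
        show TwystOff.premove (TwystOff.contract (1::2::u)) (1::u)
        rw [hc]
        refine Or.inr (Or.inr ⟨[], 1, 2, u, 1, by simp, by omega, le_rfl, by omega, ?_⟩)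
        rw [show (1:ℕ)-1 = 0 by norm_num, show (2:ℕ)-1 = 1 by norm_num]
        simp only [List.nil_append]
        rw [ct_zero, contract_pos (1::u) (by
          intro x hx
          rcases List.mem_cons.1 hx with rfl | hx
          · simp
          · exact hposU x hx)]
  | two t hw =>
    have hposT : ∀ x ∈ t, x ≠ 0 := fun x hx => hpos x (by simp [hx])
    by_cases h1 : (2 + t.sum) % 3 = 1
    · refine ⟨1::t, ?_, SP.cons1 _ (w_sp hw), by simp only [List.sum_cons] at h1 ⊢; omega⟩
      show TwystOff.premove (TwystOff.contract (2::t)) (1::t)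
      rw [hc]
      exact Or.inl ⟨2, t, 1, rfl, by omega, by omega,
        by rw [show (2:ℕ)-1 = 1 by norm_num, contract_pos (1::t) (by
          intro x hx
          rcases List.mem_cons.1 hx with rfl | hx
          · simp
          · exact hposT x hx)]⟩
    · have h2 : (2 + t.sum) % 3 = 2 := by
        simp only [List.sum_cons] at hs; omega
      refine ⟨t, ?_, w_sp hw, by omega⟩
      show TwystOff.premove (TwystOff.contract (2::t)) t
      rw [hc]
      exact Or.inl ⟨2, t, 2, rfl, by omega, le_rfl,
        by rw [show (2:ℕ)-2 = 0 by norm_num, ct_zero, contract_pos t hposT]⟩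

lemma w_of_spec : ∀ (n : ℕ) (l : List ℕ), l.length ≤ n → (∀ x ∈ l, x = 1 ∨ x = 2) →
    (∀ α r β, l = α ++ 2 :: (r ++ 2 :: β) → (∀ x ∈ r, x = 1) → Even r.length) →
    (∀ r β, l = r ++ 2 :: β → (∀ x ∈ r, x = 1) → Even r.length) → W l := by
  intro n
  induction n with
  | zero =>
    intro l hl _ _ _
    have : l = [] := List.eq_nil_of_length_eq_zero (by omega)
    subst this
    exact W.nil
  | succ n ih =>
    intro l hl h12 hint hlead
    cases l with
    | nil => exact W.nil
    | cons a t =>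
      rcases h12 a (by simp) with rfl | rfl
      · cases t with
        | nil => exact W.one
        | cons b u =>
          rcases h12 b (by simp) with rfl | rfl
          · refine W.pair _ (ih u (by simp at hl ⊢; omega) (fun x hx => h12 x (by simp [hx])) ?_ ?_)
            · intro α r β he h1
              exact hint (1::1::α) r β (by simp [he]) h1
            · intro r β he h1
              have := hlead (1::1::r) β (by simp [he]) (by
                intro x hx
                rcases List.mem_cons.1 hx with rfl | hx
                · rfl
                · rcases List.mem_cons.1 hx with rfl | hx
                  · rfl
                  · exact h1 x hx)
              simp only [List.length_cons] at this
              rcases this with ⟨m, hm⟩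
              exact ⟨m - 1, by omega⟩
          · have := hlead [1] u (by simp) (by simp)
            rcases this with ⟨m, hm⟩
            simp at hm
            omega
      · refine W.two _ (ih t (by simp at hl ⊢; omega) (fun x hx => h12 x (by simp [hx])) ?_ ?_)
        · intro α r β he h1
          exact hint (2::α) r β (by simp [he]) h1
        · intro r β he h1
          exact hint [] r β (by simp [he]) h1

lemma sp_of_spec : ∀ (n : ℕ) (l : List ℕ), l.length ≤ n → (∀ x ∈ l, x = 1 ∨ x = 2) →
    (∀ α r β, l = α ++ 2 :: (r ++ 2 :: β) → (∀ x ∈ r, x = 1) → Even r.length) → SP l := by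
  intro n
  induction n with
  | zero =>
    intro l hl _ _
    have : l = [] := List.eq_nil_of_length_eq_zero (by omega)
    subst this
    exact SP.nil
  | succ n ih =>
    intro l hl h12 hint
    cases l with
    | nil => exact SP.nil
    | cons a t =>
      rcases h12 a (by simp) with rfl | rfl
      · exact SP.cons1 _ (ih t (by simp at hl; omega) (fun x hx => h12 x (by simp [hx]))
          (fun α r β he h1 => hint (1::α) r β (by simp [he]) h1))
      · refine SP.two _ (w_of_spec t.length t le_rfl (fun x hx => h12 x (by simp [hx])) ?_ ?_)
        · intro α r β he h1
          exact hint (2::α) r β (by simp [he]) h1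
        · intro r β he h1
          exact hint [] r β (by simp [he]) h1

lemma main : ∀ (n : ℕ) (l : List ℕ), SP l → l.sum = n →
    (l.sum % 3 = 0 → TwystOff.PPos l) ∧ (l.sum % 3 ≠ 0 → TwystOff.NPos l) := by
  intro n
  induction n using Nat.strong_induction_on with
  | _ n ih =>
    intro l hl hn
    constructor
    · intro h0
      rw [ppos_iff]
      intro q hq hPq
      obtain ⟨hSq, hd⟩ := move_sp hl hq
      have hlt : q.sum < n := by have := TwystOff.Move.sum_lt hq; omega
      have hq3 : q.sum % 3 ≠ 0 := by omega
      obtain ⟨r, hr, hrP⟩ := (ih q.sum hlt q hSq rfl).2 hq3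
      rw [ppos_iff] at hPq
      exact hPq r hr hrP
    · intro h3
      obtain ⟨q, hmv, hSq, hq0⟩ := lemB hl h3
      have hlt : q.sum < n := by have := TwystOff.Move.sum_lt hmv; omega
      exact ⟨q, hmv, (ih q.sum hlt q hSq rfl).1 hq0⟩

end TwystAux

theorem S_mod_three (l : List ℕ) (h12 : ∀ x ∈ l, x = 1 ∨ x = 2)
    (hruns : ∀ α r β : List ℕ, l = α ++ [2] ++ r ++ [2] ++ β → (∀ x ∈ r, x = 1) →
      Even r.length) :
    (3 ∣ l.sum → TwystOff.PPos l) ∧ (¬ 3 ∣ l.sum → TwystOff.NPos l) := by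
  have hSP : TwystAux.SP l := TwystAux.sp_of_spec l.length l le_rfl h12
    (fun α r β he h1 => hruns α r β (by simpa using he) h1)
  have H := TwystAux.main l.sum l hSP rfl
  constructor
  · intro hd; exact H.1 (by omega)
  · intro hd; exact H.2 (by omega)
end

section
/- In Twyst-off extended to allow infinite stacks, for any finite stack sizes a₁,...,a_{n-1} (with n ≥ 1), the position (a₁,...,a_{n-1},∞) is an N position. -/
/-!
Contract the position to `xs ++ [∞]` with `xs` finite and positive; it suffices that some
reduction `xs ++ [j]` of the infinite stack is a P position. Otherwise every `xs ++ [j]` is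
an N position, so take `k` large: the winning reply from `xs ++ [k]` cannot merely reduce the
last stack, hence it is a position `ws ++ [n]` with `n ≥ k - Σ xs` and `Σ ws < 2 Σ xs`. But
for each `ws` at most one `n > 0` makes `ws ++ [n]` a P position (reducing the last stack
moves between any two of them), and there are finitely many such `ws`, so these `n` are
bounded independently of `k`.
-/

namespace TwystOffInf

/-- Contraction for stacks of size in `ℕ∞`: merge the two neighbors of an interior zero
stack (merging with an infinite stack gives `⊤`); delete empty end stacks. -/
def contract : List ℕ∞ → List ℕ∞
  | [] => []
  | a :: t =>
    if a = 0 then contract t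
    else match t with
      | [] => [a]
      | [b] => if b = 0 then [a] else [a, b]
      | b :: c :: r => if b = 0 then contract ((a + c) :: r) else a :: contract (b :: c :: r)
termination_by l => l.length

/-- A raw move in Twyst-off with infinite stacks:
* reduce an end stack to any strictly smaller value (an `∞` end stack becomes any finite size);
* remove the same finite `k > 0` from two consecutive stacks, not both infinite
  (here `⊤ - k = ⊤`, so a pair `(∞, b)` becomes `(∞, b - k)`);
* reduce a consecutive pair `(∞, ∞)` to `(k, k)` for any finite `k`.
The result is then contracted. -/
def premove (p q : List ℕ∞) : Prop :=
  (∃ a t a', p = a :: t ∧ a' < a ∧ q = contract (a' :: t)) ∨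
  (∃ a t a', p = t ++ [a] ∧ a' < a ∧ q = contract (t ++ [a'])) ∨
  (∃ α a b β, ∃ k : ℕ, p = α ++ a :: b :: β ∧ 0 < k ∧ (k : ℕ∞) ≤ a ∧ (k : ℕ∞) ≤ b ∧
      (a ≠ ⊤ ∨ b ≠ ⊤) ∧ q = contract (α ++ (a - (k : ℕ∞)) :: (b - (k : ℕ∞)) :: β)) ∨
  (∃ α β, ∃ k : ℕ, p = α ++ (⊤ : ℕ∞) :: (⊤ : ℕ∞) :: β ∧
      q = contract (α ++ (k : ℕ∞) :: (k : ℕ∞) :: β))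

/-- Moves (positions are considered up to contraction). -/
def Move (p q : List ℕ∞) : Prop := premove (contract p) q

/-- P positions: every option is an N position, i.e. for every option there is a choice of
a further P option.  (The game terminates, so this inductive definition agrees with the
usual recursive definition of P and N positions.) -/
inductive PPos : List ℕ∞ → Prop where
  | mk (p : List ℕ∞) (opt : ∀ q, Move p q → List ℕ∞)
      (hmove : ∀ q (h : Move p q), Move q (opt q h))
      (hP : ∀ q (h : Move p q), PPos (opt q h)) : PPos p

/-- N positions: some option is a P position. -/
def NPos (p : List ℕ∞) : Prop := ∃ q, Move p q ∧ PPos q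

@[simp] lemma contract_nil : contract [] = [] := by
  rw [contract.eq_def]

@[simp] lemma contract_zero_cons (t : List ℕ∞) : contract (0 :: t) = contract t := by
  rw [contract.eq_def]; simp

lemma contract_singleton {a : ℕ∞} (ha : a ≠ 0) : contract [a] = [a] := by
  rw [contract.eq_def]; simp [ha]

lemma contract_cons_zero_cons {a : ℕ∞} (ha : a ≠ 0) (c : ℕ∞) (r : List ℕ∞) :
    contract (a :: 0 :: c :: r) = contract ((a + c) :: r) := by
  rw [contract.eq_def]; simp [ha]

lemma contract_cons_cons {a b : ℕ∞} (ha : a ≠ 0) (hb : b ≠ 0) (t : List ℕ∞) :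
    contract (a :: b :: t) = a :: contract (b :: t) := by
  rcases t with _ | ⟨c, r⟩
  · rw [contract_singleton hb, contract.eq_def]; simp [ha, hb]
  · rw [contract.eq_def]; simp [ha, hb]

lemma contract_eq_self {l : List ℕ∞} (hl : 0 ∉ l) : contract l = l := by
  induction l with
  | nil => exact contract_nil
  | cons a t ih =>
    rw [List.mem_cons, not_or] at hl
    rcases t with _ | ⟨b, t⟩
    · exact contract_singleton (Ne.symm hl.1)
    · rw [contract_cons_cons (Ne.symm hl.1) (fun hb => hl.2 (hb ▸ List.mem_cons_self)), ih hl.2]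

lemma contract_append_singleton {n : ℕ∞} (hn : n ≠ 0) :
    ∀ u : List ℕ∞, ⊤ ∉ u →
      ∃ ws : List ℕ, 0 ∉ ws ∧ ∃ e : ℕ, contract (u ++ [n]) = ws.map (↑) ++ [n + e]
  | [], _ => ⟨[], by simp, 0, by simp [contract_singleton hn]⟩
  | [a], hu => by
    obtain ⟨a, rfl⟩ := ENat.ne_top_iff_exists.mp (by simpa [eq_comm] using hu)
    rcases eq_or_ne a 0 with rfl | ha
    · exact ⟨[], by simp, 0, by simp [contract_singleton hn]⟩
    · refine ⟨[a], by simpa [eq_comm] using ha, 0, ?_⟩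
      rw [List.singleton_append, contract_cons_cons (by simpa using ha) hn, contract_singleton hn]
      simp
  | a :: b :: t, hu => by
    simp only [List.mem_cons, not_or] at hu
    obtain ⟨a, rfl⟩ := ENat.ne_top_iff_exists.mp (Ne.symm hu.1)
    rcases eq_or_ne a 0 with rfl | ha
    · simpa using contract_append_singleton hn (b :: t) (by simpa [eq_comm] using hu.2)
    have ha' : (a : ℕ∞) ≠ 0 := by simpa using ha
    rcases eq_or_ne b 0 with rfl | hb
    · match ht : t with
      | [] =>
        refine ⟨[], by simp, a, ?_⟩
        simp only [List.cons_append, List.nil_append]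
        rw [contract_cons_zero_cons ha', contract_singleton (by simp [ha']), add_comm]
        simp
      | c :: t' =>
        simp only [List.mem_cons, not_or] at hu
        simp only [List.cons_append]
        rw [contract_cons_zero_cons ha']
        obtain ⟨c, rfl⟩ := ENat.ne_top_iff_exists.mp (Ne.symm hu.2.2.1)
        exact contract_append_singleton hn ((a + c : ℕ) :: t') (by simpa [eq_comm] using hu.2.2.2)
    · obtain ⟨ws, hws, e, he⟩ := contract_append_singleton hn (b :: t) (by simpa using hu.2)
      refine ⟨a :: ws, by simpa [eq_comm] using ⟨ha, hws⟩, e, ?_⟩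
      rw [List.cons_append, List.cons_append, contract_cons_cons ha' hb, ← List.cons_append, he]
      simp
termination_by u => u.length

lemma contract_append_natCast {u : List ℕ∞} (hu : ⊤ ∉ u) {m : ℕ} (hm : 0 < m) :
    ∃ ws : List ℕ, 0 ∉ ws ∧ ∃ n : ℕ, m ≤ n ∧
      contract (u ++ [(m : ℕ∞)]) = ws.map (↑) ++ [(n : ℕ∞)] := by
  obtain ⟨ws, hws, e, he⟩ :=
    contract_append_singleton (n := (m : ℕ∞)) (by simpa using hm.ne') u hu
  exact ⟨ws, hws, m + e, by omega, by rw [he, Nat.cast_add]⟩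

/-- Lexicographic in (number of infinite stacks, total finite size): a move may replace an
infinite stack by arbitrarily many tiles. -/
def stackRank (a : ℕ∞) : ℕ ×ₗ ℕ := if a = ⊤ then toLex (1, 0) else toLex (0, a.toNat)

def rank (p : List ℕ∞) : ℕ ×ₗ ℕ := (p.map stackRank).sum

@[simp] lemma stackRank_top : stackRank ⊤ = toLex (1, 0) := if_pos rfl

@[simp] lemma stackRank_natCast (n : ℕ) : stackRank n = toLex (0, n) := by
  simp [stackRank]

@[simp] lemma stackRank_zero : stackRank 0 = 0 :=
  stackRank_natCast 0

lemma stackRank_strictMono : StrictMono stackRank := by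
  intro a b hab
  obtain ⟨a, rfl⟩ := ENat.ne_top_iff_exists.mp hab.ne_top
  cases b using ENat.recTopCoe
  · simp [Prod.Lex.toLex_lt_toLex]
  · simpa [Prod.Lex.toLex_lt_toLex] using hab

lemma stackRank_add_le (a c : ℕ∞) : stackRank (a + c) ≤ stackRank a + stackRank c := by
  cases a using ENat.recTopCoe <;> cases c using ENat.recTopCoe <;>
    simp [← Nat.cast_add, ← toLex_add, Prod.Lex.toLex_le_toLex]

lemma stackRank_sub_lt {a : ℕ∞} (ha : a ≠ ⊤) {k : ℕ} (hk : 0 < k) (hka : (k : ℕ∞) ≤ a) :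
    stackRank (a - k) < stackRank a := by
  obtain ⟨a, rfl⟩ := ENat.ne_top_iff_exists.mp ha
  rw [← ENat.natCast_sub]
  exact stackRank_strictMono (by norm_cast at hka ⊢; omega)

@[simp] lemma rank_nil : rank [] = 0 := rfl

@[simp] lemma rank_cons (a : ℕ∞) (l : List ℕ∞) : rank (a :: l) = stackRank a + rank l := by
  simp [rank]

@[simp] lemma rank_append (l₁ l₂ : List ℕ∞) : rank (l₁ ++ l₂) = rank l₁ + rank l₂ := by
  simp [rank]

lemma rank_map_natCast (ws : List ℕ) : rank (ws.map (↑)) = toLex (0, ws.sum) := by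
  induction ws with
  | nil => rfl
  | cons w ws ih => simp [ih, ← toLex_add]

lemma rank_contract_le (l : List ℕ∞) : rank (contract l) ≤ rank l := by
  induction l using contract.induct with
  | case1 => simp
  | case2 t ih => simpa using ih
  | case3 a ha => rw [contract_singleton ha]
  | case4 a ha => rw [contract.eq_def]; simp [ha]
  | case5 a ha b hb => rw [contract_cons_cons ha hb, contract_singleton hb]
  | case6 a ha c r ih =>
    rw [contract_cons_zero_cons ha]
    calc rank (contract ((a + c) :: r)) ≤ stackRank (a + c) + rank r := by simpa using ih
      _ ≤ stackRank a + stackRank c + rank r := by gcongr; exact stackRank_add_le a c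
      _ = rank (a :: 0 :: c :: r) := by simp [add_assoc]
  | case7 a ha b c r hb ih =>
    rw [contract_cons_cons ha hb]
    simpa using ih

lemma rank_lt_of_premove {p q : List ℕ∞} (h : premove p q) : rank q < rank p := by
  rcases h with ⟨a, t, a', rfl, hlt, rfl⟩ | ⟨a, t, a', rfl, hlt, rfl⟩ |
    ⟨α, a, b, β, k, rfl, hk, hka, hkb, hfin, rfl⟩ | ⟨α, β, k, rfl, rfl⟩ <;>
    refine (rank_contract_le _).trans_lt ?_
  · simpa using stackRank_strictMono hlt
  · simpa using stackRank_strictMono hlt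
  · have hsub : stackRank (a - k) + stackRank (b - k) < stackRank a + stackRank b := by
      have hle {x : ℕ∞} : stackRank (x - k) ≤ stackRank x :=
        stackRank_strictMono.monotone tsub_le_self
      rcases hfin with ha | hb
      · exact add_lt_add_of_lt_of_le (stackRank_sub_lt ha hk hka) hle
      · exact add_lt_add_of_le_of_lt hle (stackRank_sub_lt hb hk hkb)
    simpa [← add_assoc] using add_lt_add_right hsub (rank α)
  · have hpair : stackRank k + stackRank k < stackRank ⊤ + stackRank ⊤ := by
      simp [← toLex_add, Prod.Lex.toLex_lt_toLex]
    simpa [← add_assoc] using add_lt_add_right hpair (rank α)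

lemma rank_lt_of_move {p q : List ℕ∞} (h : Move p q) : rank q < rank p :=
  (rank_lt_of_premove h).trans_le (rank_contract_le p)

lemma wellFounded_move : WellFounded (fun q p => Move p q) :=
  Subrelation.wf rank_lt_of_move (InvImage.wf rank wellFounded_lt)

lemma PPos.nPos_of_move {p q : List ℕ∞} (hp : PPos p) (h : Move p q) : NPos q := by
  obtain ⟨_, opt, hmove, hP⟩ := hp
  exact ⟨opt q h, hmove q h, hP q h⟩

lemma PPos.of_forall_nPos {p : List ℕ∞} (h : ∀ q, Move p q → NPos q) : PPos p := by
  choose opt hmove hP using h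
  exact ⟨p, opt, hmove, hP⟩

lemma PPos.not_nPos {p : List ℕ∞} (hp : PPos p) : ¬ NPos p := by
  induction hp with
  | mk p opt hmove hP ih =>
    rintro ⟨q, hpq, hq⟩
    exact ih q hpq (hq.nPos_of_move (hmove q hpq))

lemma pPos_or_nPos (p : List ℕ∞) : PPos p ∨ NPos p := by
  induction p using wellFounded_move.induction with
  | _ p ih =>
    refine or_iff_not_imp_right.mpr fun hN => PPos.of_forall_nPos fun q hq => ?_
    exact (ih q hq).resolve_left fun hP => hN ⟨q, hq, hP⟩

lemma not_nPos_nil : ¬ NPos [] := by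
  rintro ⟨q, ⟨a, t, -, h, -⟩ | ⟨a, t, -, h, -⟩ | ⟨α, a, b, β, -, h, -⟩ | ⟨α, β, -, h, -⟩, -⟩ <;>
    simp at h

lemma move_reduce_last {p t : List ℕ∞} {a a' : ℕ∞} (h : contract p = t ++ [a]) (ha : a' < a) :
    Move p (contract (t ++ [a'])) := by
  unfold Move
  rw [h]
  exact Or.inr (Or.inl ⟨a, t, a', rfl, ha, rfl⟩)

lemma contract_map_natCast_append {ws : List ℕ} (hws : 0 ∉ ws) {n : ℕ} (hn : 0 < n) :
    contract (ws.map (↑) ++ [(n : ℕ∞)]) = ws.map (↑) ++ [(n : ℕ∞)] :=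
  contract_eq_self (by simpa [eq_comm, hn.ne'] using hws)

lemma subsingleton_setOf_pPos_append {ws : List ℕ} (hws : 0 ∉ ws) :
    {n : ℕ | 0 < n ∧ PPos (ws.map (↑) ++ [(n : ℕ∞)])}.Subsingleton := by
  intro m ⟨hm, hPm⟩ n ⟨hn, hPn⟩
  wlog hlt : n < m generalizing m n
  · rcases (not_lt.mp hlt).lt_or_eq with h | h
    · exact (this hn hPn hm hPm h).symm
    · exact h
  have hmove := move_reduce_last (contract_map_natCast_append hws hm) (Nat.cast_lt.mpr hlt)
  rw [contract_map_natCast_append hws hn] at hmove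
  exact (hPm.not_nPos ⟨_, hmove, hPn⟩).elim

lemma finite_setOf_sum_le (B : ℕ) : {ws : List ℕ | 0 ∉ ws ∧ ws.sum ≤ B}.Finite := by
  refine ((Set.finite_Iic B).biUnion fun n _ =>
    Set.finite_range (Composition.blocks (n := n))).subset ?_
  rintro ws ⟨h0, hB⟩
  exact Set.mem_biUnion (x := ws.sum) hB
    ⟨⟨ws, fun hi => Nat.pos_of_ne_zero (by rintro rfl; exact h0 hi), rfl⟩, rfl⟩

lemma exists_bound_pPos_append (B : ℕ) :
    ∃ N : ℕ, ∀ ws : List ℕ, 0 ∉ ws → ws.sum ≤ B →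
      ∀ n : ℕ, 0 < n → PPos (ws.map (↑) ++ [(n : ℕ∞)]) → n ≤ N := by
  obtain ⟨N, hN⟩ := ((finite_setOf_sum_le B).biUnion fun ws hws =>
    (subsingleton_setOf_pPos_append hws.1).finite).bddAbove
  exact ⟨N, fun ws h0 hB n hn hP => hN (Set.mem_biUnion ⟨h0, hB⟩ ⟨hn, hP⟩)⟩

lemma exists_eq_append_of_pair_move {xs : List ℕ} {k K : ℕ} (hk : xs.sum < k)
    {α β : List ℕ∞} {a b : ℕ∞} (heq : xs.map (↑) ++ [(k : ℕ∞)] = α ++ a :: b :: β)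
    (hKa : (K : ℕ∞) ≤ a) :
    ∃ u : List ℕ∞, ⊤ ∉ u ∧ ∃ m : ℕ, 0 < m ∧ k ≤ m + xs.sum ∧
      α ++ (a - K) :: (b - K) :: β = u ++ [(m : ℕ∞)] := by
  have hX : ⊤ ∉ xs.map ((↑) : ℕ → ℕ∞) := by simp
  rcases List.eq_nil_or_concat' β with rfl | ⟨β, c, rfl⟩
  · obtain ⟨hα, hb⟩ := List.append_inj' (heq.trans (by simp) :
      xs.map (↑) ++ [(k : ℕ∞)] = (α ++ [a]) ++ [b]) rfl
    obtain rfl : (k : ℕ∞) = b := by simpa using hb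
    obtain ⟨x, hx, rfl⟩ := List.mem_map.mp (hα ▸ by simp : a ∈ xs.map ((↑) : ℕ → ℕ∞))
    have hxs : x ≤ xs.sum := List.le_sum_of_mem hx
    have hKx : K ≤ x := by exact_mod_cast hKa
    have hα_top : ⊤ ∉ α := fun h => hX (hα ▸ List.mem_append_left _ h)
    refine ⟨α ++ [((x - K : ℕ) : ℕ∞)], by simpa [eq_comm] using hα_top, k - K, by omega,
      by omega, ?_⟩
    simp [ENat.natCast_sub]
  · obtain ⟨hα, hc⟩ := List.append_inj' (heq.trans (by simp) :
      xs.map (↑) ++ [(k : ℕ∞)] = (α ++ a :: b :: β) ++ [c]) rfl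
    obtain rfl : (k : ℕ∞) = c := by simpa using hc
    refine ⟨α ++ (a - K) :: (b - K) :: β, ?_, k, by omega, by omega, by simp⟩
    have : ⊤ ∉ α ++ a :: b :: β := hα ▸ hX
    simp only [List.mem_append, List.mem_cons, not_or] at this ⊢
    simp [ENat.sub_eq_top_iff, eq_comm] at this ⊢
    tauto

/-- Only a pair move on the last two stacks shrinks the last stack without replacing it, and
by at most the size of its neighbour. -/
lemma premove_map_natCast_append_cases {xs : List ℕ} (hxs : xs ≠ []) {k : ℕ} (hk : xs.sum < k)
    {r : List ℕ∞} (h : premove (xs.map (↑) ++ [(k : ℕ∞)]) r) :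
    (∃ j : ℕ, r = contract (xs.map (↑) ++ [(j : ℕ∞)])) ∨
      ∃ ws : List ℕ, 0 ∉ ws ∧ ∃ n : ℕ, k ≤ n + xs.sum ∧ r = ws.map (↑) ++ [(n : ℕ∞)] := by
  have reply {u : List ℕ∞} (hu : ⊤ ∉ u) {m : ℕ} (hm : 0 < m) (hkm : k ≤ m + xs.sum)
      (hr : r = contract (u ++ [(m : ℕ∞)])) :
      ∃ ws : List ℕ, 0 ∉ ws ∧ ∃ n : ℕ, k ≤ n + xs.sum ∧ r = ws.map (↑) ++ [(n : ℕ∞)] := by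
    obtain ⟨ws, hws, n, hmn, he⟩ := contract_append_natCast hu hm
    exact ⟨ws, hws, n, by omega, hr.trans he⟩
  rcases h with ⟨a, t, a', heq, hlt, hr⟩ | ⟨a, t, a', heq, hlt, hr⟩ |
    ⟨α, a, b, β, K, heq, -, hKa, -, -, hr⟩ | ⟨α, β, K, heq, -⟩
  · obtain ⟨x, xs', rfl⟩ := List.exists_cons_of_ne_nil hxs
    simp only [List.map_cons, List.cons_append, List.cons.injEq] at heq
    obtain ⟨-, rfl⟩ := heq
    rw [← List.cons_append] at hr
    refine Or.inr (reply ?_ (by omega) (by omega) hr)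
    simpa [eq_comm] using hlt.ne_top
  · obtain ⟨rfl, hka⟩ := List.append_inj' heq rfl
    obtain rfl : (k : ℕ∞) = a := by simpa using hka
    obtain ⟨j, rfl⟩ := ENat.ne_top_iff_exists.mp hlt.ne_top
    exact Or.inl ⟨j, hr⟩
  · obtain ⟨u, hu, m, hm, hkm, hpair⟩ := exists_eq_append_of_pair_move hk heq hKa
    exact Or.inr (reply hu hm hkm (hpair ▸ hr))
  · have : (⊤ : ℕ∞) ∈ xs.map (↑) ++ [(k : ℕ∞)] := by simp [heq]
    simp at this

theorem exists_not_nPos_contract_append {xs : List ℕ} (hxs : 0 ∉ xs) :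
    ∃ j : ℕ, ¬ NPos (contract (xs.map (↑) ++ [(j : ℕ∞)])) := by
  rcases eq_or_ne xs [] with rfl | hne
  · exact ⟨0, by simpa using not_nPos_nil⟩
  by_contra! hN
  obtain ⟨N, hbound⟩ := exists_bound_pPos_append (2 * xs.sum)
  have hq := contract_map_natCast_append hxs (n := xs.sum + N + 1) (by omega)
  obtain ⟨r, hqr, hr⟩ := hq ▸ hN (xs.sum + N + 1)
  have hpre : premove (xs.map (↑) ++ [((xs.sum + N + 1 : ℕ) : ℕ∞)]) r := hq ▸ hqr
  rcases premove_map_natCast_append_cases hne (by omega) hpre with ⟨j, rfl⟩ | ⟨ws, hws, n, hn, rfl⟩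
  · exact hr.not_nPos (hN j)
  · have hrank := rank_lt_of_move hqr
    simp only [rank_append, rank_map_natCast, rank_cons, stackRank_natCast, rank_nil, add_zero,
      ← toLex_add, Prod.mk_add_mk, Prod.Lex.toLex_lt_toLex] at hrank
    have := hbound ws hws (by omega) n (by omega) hr
    omega

end TwystOffInf

theorem last_infinity_N (l : List ℕ) :
    TwystOffInf.NPos (l.map (fun a => (a : ℕ∞)) ++ [⊤]) := by
  obtain ⟨ws, hws, e, hc⟩ :=
    TwystOffInf.contract_append_singleton (n := ⊤) (by simp) (l.map (fun a => (a : ℕ∞))) (by simp)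
  rw [top_add] at hc
  obtain ⟨j, hj⟩ := TwystOffInf.exists_not_nPos_contract_append hws
  exact ⟨_, TwystOffInf.move_reduce_last hc (ENat.natCast_lt_top j),
    (TwystOffInf.pPos_or_nPos _).resolve_right hj⟩
end
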